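/- If two tagged pentatopes t and t' of the same type share a common hyperface and the vertex order of t' agrees with that of t in all but one position, then t and t' are reflected neighbors; moreover the relation 'reflected neighbors' is symmetric: t' agrees with t or t_R in all but one position if and only if t agrees with t' or t'_R in all but one position. -/
import Mathlib


/-- A tagged pentatope: an ordered 5-tuple of vertices together with a type γ ∈ {0,1,2,3}. -/
structure TP (V : Type*) where
  v : Fin 5 → V
  γ : Fin 4

/-- The vertex permutation used in Stevenson's reflection, depending on the type. -/
def refPerm (γ : Fin 4) : Fin 5 → Fin 5 :=
  if γ = 0 then ![4, 3, 2, 1, 0]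
  else if γ = 1 then ![4, 1, 3, 2, 0]
  else ![4, 1, 2, 3, 0]

/-- The reflection of a tagged pentatope. -/
def TP.reflect {V : Type*} (t : TP V) : TP V := ⟨t.v ∘ refPerm t.γ, t.γ⟩

/-- Two vertex orderings agree in all but (at most) one position. -/
def agreeButOne {V : Type*} (u w : Fin 5 → V) : Prop :=
  ∃ i : Fin 5, ∀ j : Fin 5, j ≠ i → u j = w j

/-- Reflected neighbors: same type, share a hyperface (four common vertices), and the
vertex order of t' matches that of t or of its reflection t_R in all but one
position. -/
def ReflNbr {V : Type*} (t t' : TP V) : Prop :=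
  t.γ = t'.γ ∧ (Set.range t.v ∩ Set.range t'.v).encard = 4 ∧
    (agreeButOne t.v t'.v ∨ agreeButOne t.reflect.v t'.v)


lemma refPerm_invol (γ : Fin 4) (j : Fin 5) : refPerm γ (refPerm γ j) = j := by
  revert γ j; decide

lemma agreeButOne_symm {V : Type*} {u w : Fin 5 → V} (h : agreeButOne u w) :
    agreeButOne w u := by
  obtain ⟨i, h⟩ := h
  exact ⟨i, fun j hj => (h j hj).symm⟩

lemma agreeButOne_reflect_swap {V : Type*} (γ : Fin 4) (u w : Fin 5 → V)
    (h : agreeButOne (u ∘ refPerm γ) w) : agreeButOne (w ∘ refPerm γ) u := by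
  obtain ⟨i, h⟩ := h
  refine ⟨refPerm γ i, fun j hj => ?_⟩
  have hne : refPerm γ j ≠ i := by
    intro e
    apply hj
    rw [← e, refPerm_invol]
  have := h (refPerm γ j) hne
  simpa [refPerm_invol] using this.symm

/-- If two tagged pentatopes of the same type share a common hyperface
(four common vertices) and the vertex order of t' agrees with that of t in all but one
position, then t and t' are reflected neighbors; moreover the matching-up-to-reflection
condition is symmetric. -/
theorem reflected_neighbors_criterion_and_symm {V : Type*} (t t' : TP V) :
    (t.γ = t'.γ → (Set.range t.v ∩ Set.range t'.v).encard = 4 →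
      agreeButOne t.v t'.v → ReflNbr t t') ∧
    (t.γ = t'.γ →
      ((agreeButOne t.v t'.v ∨ agreeButOne t.reflect.v t'.v) ↔
        (agreeButOne t'.v t.v ∨ agreeButOne t'.reflect.v t.v))) :=  by
  constructor
  · intro h1 h2 h3
    exact ⟨h1, h2, Or.inl h3⟩
  · intro hγ
    have key : ∀ a b : TP V, a.γ = b.γ →
        (agreeButOne a.v b.v ∨ agreeButOne a.reflect.v b.v) →
        (agreeButOne b.v a.v ∨ agreeButOne b.reflect.v a.v) := by
      rintro a b hab (h | h)
      · exact Or.inl (agreeButOne_symm h)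
      · right
        have := agreeButOne_reflect_swap a.γ a.v b.v h
        simpa [TP.reflect, hab] using this
    exact ⟨key t t' hγ, key t' t hγ.symm⟩
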